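/- Let x ∈ Y with x_i finite for 1 ≤ i < M and x_i = ∞ for i ≥ M, let K ∈ ℕ with K ≥ x_{M−1}, and define y ∈ Y by y_i = x_i for 0 ≤ i < M and y_i = K for i ≥ M. Then for every n ≥ 1, the zeroth coordinates x₀ⁿ of Fⁿ(x) and y₀ⁿ of Fⁿ(y) differ by (2^{−M+1}·Σ_{j=0}^{n−1} 1/(K+j)) mod 1, and moreover d_i(x_iⁿ, y_iⁿ) = 0 for 0 < i < M and d_i(x_iⁿ, y_iⁿ) = 1/(K+n) for i ≥ M. -/

import Mathlib

open Filter

noncomputable section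

instance : Fact ((0:ℝ) < 1) := ⟨one_pos⟩

/-- The unit circle `𝕊 = ℝ/ℤ` (with the metric `d₀(x,y) = min{|x−y|, 1−|x−y|}`). -/
abbrev Circle1 := AddCircle (1 : ℝ)

/-- Points of the product space `Π_{i=0}^∞ X_i = 𝕊 × Π_{i≥1} (ℕ ∪ {∞})`:
the first component is the circle coordinate `x₀`, and the second component gives
the coordinates `x_i ∈ ℕ ∪ {∞}` for `i ≥ 1`. -/
abbrev Pt := Circle1 × (ℕ+ → ℕ∞)

/-- `1/x` for `x ∈ ℕ ∪ {∞}`, with the convention `1/∞ = 0`. -/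
noncomputable def einv (x : ℕ∞) : ℝ := ((x.toNat : ℕ) : ℝ)⁻¹

/-- The metric `d_i(x,y) = |1/x − 1/y|` on `ℕ ∪ {∞}` (for `i ≥ 1`). -/
noncomputable def dE (x y : ℕ∞) : ℝ := |einv x - einv y|

/-- The metric `D(x,y) = Σ_{i=0}^∞ d_i(x_i,y_i)/2^i` on the product space. -/
noncomputable def D (x y : Pt) : ℝ :=
  dist x.1 y.1 + ∑' i : ℕ+, dE (x.2 i) (y.2 i) / 2 ^ (i : ℕ)

/-- `Y`: the set of points whose sequence of coordinates `(x_i)_{i≥1}` is a nondecreasing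
sequence in `ℕ ∪ {∞}` (with `ℕ = {1,2,…}`). -/
def Y : Set Pt := {x | (∀ i, 1 ≤ x.2 i) ∧ Monotone x.2}

/-- The skew-product map `F`: `f₀(x) = (x₀ + Σ_{i≥1} 2^{−i}·(1/x_i)) mod 1` and
`f_i(x) = x_i + 1` for `i ≥ 1`, with `∞ + 1 = ∞`. -/
noncomputable def F (x : Pt) : Pt :=
  (x.1 + (((∑' i : ℕ+, (1 / 2 ^ (i : ℕ)) * einv (x.2 i)) : ℝ) : Circle1),
   fun i => x.2 i + 1)

/-- `(x, y)` is a scrambled pair of `F`: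
`liminf_{n→∞} D(Fⁿ(x), Fⁿ(y)) = 0` and `limsup_{n→∞} D(Fⁿ(x), Fⁿ(y)) > 0`. -/
def ScrambledPair (x y : Pt) : Prop :=
  liminf (fun n : ℕ => D (F^[n] x) (F^[n] y)) atTop = 0 ∧
  0 < limsup (fun n : ℕ => D (F^[n] x) (F^[n] y)) atTop

/-!
Write `θ(w) = Σ_{i ≥ 1} 2^{-i} / w_i` for the angle by which `F` rotates the circle coordinate,
so that `x₀ⁿ = x₀ + Σ_{j<n} θ(x + j)` while the other coordinates just move up by `n`. Since `x`
and `y` agree below `M`, and from index `M` on the coordinates of `x + j` are `∞` while those of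
`y + j` are `K + j`, each angle of `y` exceeds the matching one of `x` by
`(K + j)⁻¹ · Σ_{i ≥ M} 2^{-i} = 2^{1-M} / (K + j)`.
-/

open Finset

lemma einv_top : einv ⊤ = 0 := by
  simp [einv]

lemma einv_natCast (k : ℕ) : einv k = (k : ℝ)⁻¹ := by
  simp [einv]

lemma einv_nonneg (z : ℕ∞) : 0 ≤ einv z := by
  unfold einv; positivity

lemma einv_le_one (z : ℕ∞) : einv z ≤ 1 := by
  unfold einv
  rcases Nat.eq_zero_or_pos z.toNat with h | h
  · simp [h]
  · exact inv_le_one_of_one_le₀ (by exact_mod_cast h)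

def rotationAngle (w : ℕ+ → ℕ∞) : ℝ :=
  ∑' i : ℕ+, (1 / 2 ^ (i : ℕ)) * einv (w i)

lemma F_apply (z : Pt) : F z = (z.1 + (rotationAngle z.2 : Circle1), fun i => z.2 i + 1) :=
  rfl

lemma F_iterate_snd (z : Pt) (n : ℕ) (i : ℕ+) : (F^[n] z).2 i = z.2 i + n := by
  induction n with
  | zero => simp
  | succ n ih =>
    rw [Function.iterate_succ_apply', F_apply]
    dsimp only
    rw [ih, Nat.cast_succ, add_assoc]

lemma F_iterate_fst (z : Pt) (n : ℕ) :
    (F^[n] z).1 = z.1 + ((∑ j ∈ range n, rotationAngle (fun i => z.2 i + j) : ℝ) : Circle1) := by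
  induction n with
  | zero => simp
  | succ n ih =>
    have hsnd : (F^[n] z).2 = fun i => z.2 i + n := funext (F_iterate_snd z n)
    rw [Function.iterate_succ_apply', F_apply, ih, hsnd, sum_range_succ, AddCircle.coe_add,
      add_assoc]

lemma summable_rotationAngle (w : ℕ+ → ℕ∞) :
    Summable (fun i : ℕ+ => (1 / 2 ^ (i : ℕ) : ℝ) * einv (w i)) := by
  have hgeom : Summable (fun i : ℕ+ => (1 / 2 : ℝ) ^ (i : ℕ)) :=
    summable_geometric_two.comp_injective PNat.coe_injective
  refine hgeom.of_nonneg_of_le (fun i => by have := einv_nonneg (w i); positivity) fun i => ?_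
  rw [div_pow, one_pow]
  exact mul_le_of_le_one_right (by positivity) (einv_le_one _)

lemma tsum_ite_le_one_div_two_pow (M : ℕ+) :
    ∑' i : ℕ+, (if M ≤ i then 1 / 2 ^ (i : ℕ) else 0 : ℝ) = 2 ^ (1 - (M : ℤ)) := by
  let f : ℕ → ℝ := fun i => if (M : ℕ) ≤ i then 2⁻¹ ^ i else 0
  have hf0 : f 0 = 0 := if_neg (by simp)
  have hf : Summable f := summable_geometric_two.of_nonneg_of_le
    (fun i => by dsimp only [f]; split_ifs <;> positivity)
    (fun i => by dsimp only [f]; split_ifs <;> simp)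
  calc ∑' i : ℕ+, (if M ≤ i then 1 / 2 ^ (i : ℕ) else 0 : ℝ) = ∑' i : ℕ+, f i :=
        tsum_congr fun i => by simp only [f, PNat.coe_le_coe, one_div, inv_pow]
    _ = 2 * 2⁻¹ ^ (M : ℕ) := by
        rw [← tsum_geometric_inv_two_ge, ← tsum_zero_pnat_eq_tsum_nat hf, hf0, zero_add]
    _ = 2 ^ (1 - (M : ℤ)) := by
        rw [zpow_sub₀ two_ne_zero, zpow_one, zpow_natCast, inv_pow, div_eq_mul_inv]

lemma rotationAngle_sub_of_eq_top (v w : ℕ+ → ℕ∞) (M : ℕ+) (c : ℕ)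
    (hlt : ∀ i, i < M → v i = w i) (hv : ∀ i, M ≤ i → v i = c) (hw : ∀ i, M ≤ i → w i = ⊤) :
    rotationAngle v - rotationAngle w = 2 ^ (1 - (M : ℤ)) * (1 / c) := by
  have hterm : ∀ i : ℕ+, (1 / 2 ^ (i : ℕ) : ℝ) * einv (v i) - 1 / 2 ^ (i : ℕ) * einv (w i) =
      (if M ≤ i then 1 / 2 ^ (i : ℕ) else 0) * (1 / c) := by
    intro i
    by_cases hi : M ≤ i
    · simp [hi, hv i hi, hw i hi, einv_top, einv_natCast]
    · simp [hi, hlt i (not_le.mp hi)]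
  rw [rotationAngle, rotationAngle, ← (summable_rotationAngle v).tsum_sub
    (summable_rotationAngle w), tsum_congr hterm, tsum_mul_right, tsum_ite_le_one_div_two_pow]

theorem claim1_coordinates_general
    (x : Pt) (M : ℕ+)
    (hinf : ∀ i : ℕ+, M ≤ i → x.2 i = ⊤)
    (K : ℕ)
    (y : Pt) (hy0 : y.1 = x.1)
    (hyi : ∀ i : ℕ+, i < M → y.2 i = x.2 i)
    (hyK : ∀ i : ℕ+, M ≤ i → y.2 i = (K : ℕ∞))
    (n : ℕ) :
    (F^[n] y).1 = (F^[n] x).1 +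
        ((((2 : ℝ) ^ (1 - (M : ℤ)) * ∑ j ∈ Finset.range n, (1 : ℝ) / (K + j)) : ℝ) : Circle1) ∧
    (∀ i : ℕ+, i < M → dE ((F^[n] x).2 i) ((F^[n] y).2 i) = 0) ∧
    (∀ i : ℕ+, M ≤ i → dE ((F^[n] x).2 i) ((F^[n] y).2 i) = 1 / (K + n)) := by
  refine ⟨?_, fun i hi => ?_, fun i hi => ?_⟩
  · have hangle : ∀ j : ℕ, rotationAngle (fun i => y.2 i + j) =
        rotationAngle (fun i => x.2 i + j) + 2 ^ (1 - (M : ℤ)) * (1 / (K + j)) := by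
      intro j
      rw [← sub_eq_iff_eq_add', rotationAngle_sub_of_eq_top _ _ M (K + j)
        (fun i hi => by rw [hyi i hi]) (fun i hi => by rw [hyK i hi, Nat.cast_add])
        (fun i hi => by rw [hinf i hi, top_add]), Nat.cast_add]
    rw [F_iterate_fst, F_iterate_fst, hy0, add_assoc, ← AddCircle.coe_add, mul_sum,
      ← sum_add_distrib, sum_congr rfl fun j _ => hangle j]
  · rw [F_iterate_snd, F_iterate_snd, hyi i hi, dE, sub_self, abs_zero]
  · rw [F_iterate_snd, F_iterate_snd, hinf i hi, hyK i hi, top_add, ← Nat.cast_add, dE, einv_top,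
      einv_natCast, zero_sub, abs_neg, abs_of_nonneg (by positivity), Nat.cast_add, one_div]

/-- In the setting of Claim 1 (`x ∈ Y` with `x_i` finite for `1 ≤ i < M` and `x_i = ∞` for
`i ≥ M`; `K ∈ ℕ` with `K ≥ x_{M−1}`; `y ∈ Y` with `y_i = x_i` for `0 ≤ i < M` and `y_i = K`
for `i ≥ M`), for every `n ≥ 1` the zeroth coordinates of `Fⁿ(x)` and `Fⁿ(y)` differ by
`(2^{−M+1} · Σ_{j=0}^{n−1} 1/(K+j)) mod 1`, and moreover `d_i(x_iⁿ, y_iⁿ) = 0` for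
`0 < i < M` and `d_i(x_iⁿ, y_iⁿ) = 1/(K+n)` for `i ≥ M`. -/
theorem claim1_coordinates
    (x : Pt) (hx : x ∈ Y) (M : ℕ+)
    (hfin : ∀ i : ℕ+, i < M → x.2 i ≠ ⊤) (hinf : ∀ i : ℕ+, M ≤ i → x.2 i = ⊤)
    (K : ℕ) (hK1 : 1 ≤ K) (hK : ∀ i : ℕ+, i < M → x.2 i ≤ (K : ℕ∞))
    (y : Pt) (hy : y ∈ Y) (hy0 : y.1 = x.1)
    (hyi : ∀ i : ℕ+, i < M → y.2 i = x.2 i)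
    (hyK : ∀ i : ℕ+, M ≤ i → y.2 i = (K : ℕ∞))
    (n : ℕ) (hn : 1 ≤ n) :
    (F^[n] y).1 = (F^[n] x).1 +
        ((((2 : ℝ) ^ (1 - (M : ℤ)) * ∑ j ∈ Finset.range n, (1 : ℝ) / (K + j)) : ℝ) : Circle1) ∧
    (∀ i : ℕ+, i < M → dE ((F^[n] x).2 i) ((F^[n] y).2 i) = 0) ∧
    (∀ i : ℕ+, M ≤ i → dE ((F^[n] x).2 i) ((F^[n] y).2 i) = 1 / (K + n)) :=
  claim1_coordinates_general x M hinf K y hy0 hyi hyK n
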